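/- Let (Ω, ℱ, μ) be a probability space, m ⊆ m' ⊆ ℱ sub-σ-algebras, and η, κ ≥ 0 with η + κ < 1. Let λ be a nonnegative, m-measurable, square-integrable random variable; let Z be a square-integrable, m'-measurable random variable that is conditionally Poisson given m with intensity λ; let W be a nonnegative, square-integrable, m'-measurable random variable independent of the σ-algebra generated by m and Z; set λ' := W + η·Z + κ·λ; and let Z' be a square-integrable random variable that is conditionally Poisson given m' with intensity λ'. If in addition E[Z'] = E[Z] and Var(Z') = Var(Z) (second-order stationarity), then Var(Z) = Var(W)/(1 − (η + κ)²) + ((1 − κ² − 2κη)/(1 − (η + κ)²))·E[Z]. -/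

import Mathlib

/-!
Taking expectations of the conditional moments gives the law of total variance for a
conditionally Poisson count, `Var Z = E λ + Var λ`, and likewise `Var Z' = E λ' + Var λ'`.
Since `E[Z | m] = λ` with `λ` `m`-measurable, `Cov(Z, λ) = Var λ`, and independence of `W`
splits off its variance: `Var λ' = Var W + η² Var Z + (2ηκ + κ²) Var λ`. Stationarity gives
`E λ' = E Z = E λ`, and substituting `Var λ = Var Z - E Z` leaves a linear equation for `Var Z`
whose coefficient `1 - (η + κ)²` is nonzero.
-/

open MeasureTheory ProbabilityTheory

section CondMoments

variable {Ω : Type*} {mΩ : MeasurableSpace Ω} {μ : Measure Ω} {m : MeasurableSpace Ω}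

lemma integral_eq_of_condExp_ae_eq [IsFiniteMeasure μ] {X Y : Ω → ℝ} (hm : m ≤ mΩ)
    (h : μ[X | m] =ᵐ[μ] Y) : ∫ ω, X ω ∂μ = ∫ ω, Y ω ∂μ := by
  rw [← integral_condExp hm]
  exact integral_congr_ae h

lemma covariance_eq_variance_of_condExp_ae_eq [IsProbabilityMeasure μ] {X Y : Ω → ℝ}
    (hm : m ≤ mΩ) (hXm : StronglyMeasurable[m] X) (hX : MemLp X 2 μ) (hY : MemLp Y 2 μ)
    (h : μ[Y | m] =ᵐ[μ] X) : cov[Y, X; μ] = Var[X; μ] := by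
  have hXY : μ[X * Y | m] =ᵐ[μ] X * X := by
    filter_upwards [condExp_mul_of_stronglyMeasurable_left hXm (hX.integrable_mul hY)
      (hY.integrable one_le_two), h] with ω hpull hω
    simp only [hpull, Pi.mul_apply, hω]
  rw [← covariance_self hX.aemeasurable, covariance_eq_sub hY hX, covariance_eq_sub hX hX,
    mul_comm Y X, integral_eq_of_condExp_ae_eq hm hXY, integral_eq_of_condExp_ae_eq hm h]

/-- Only the first two conditional moments of a Poisson law of intensity `lam` are required. -/
def IsCondPoisson (μ : Measure Ω) (m : MeasurableSpace Ω) (Z lam : Ω → ℝ) : Prop :=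
  μ[Z | m] =ᵐ[μ] lam ∧ μ[fun ω => Z ω ^ 2 | m] =ᵐ[μ] fun ω => lam ω + lam ω ^ 2

namespace IsCondPoisson

variable [IsProbabilityMeasure μ] {Z lam : Ω → ℝ}

lemma integral_eq (h : IsCondPoisson μ m Z lam) (hm : m ≤ mΩ) :
    ∫ ω, Z ω ∂μ = ∫ ω, lam ω ∂μ :=
  integral_eq_of_condExp_ae_eq hm h.1

lemma variance_eq (h : IsCondPoisson μ m Z lam) (hm : m ≤ mΩ) (hZ : MemLp Z 2 μ)
    (hlam : MemLp lam 2 μ) : Var[Z; μ] = ∫ ω, lam ω ∂μ + Var[lam; μ] := by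
  have hsq : ∫ ω, Z ω ^ 2 ∂μ = ∫ ω, lam ω ∂μ + ∫ ω, lam ω ^ 2 ∂μ := by
    rw [integral_eq_of_condExp_ae_eq hm h.2,
      integral_add (hlam.integrable one_le_two) hlam.integrable_sq]
  rw [variance_eq_sub hZ, variance_eq_sub hlam, Pi.pow_def, Pi.pow_def, hsq, h.integral_eq hm]
  ring

end IsCondPoisson

end CondMoments

lemma variance_const_mul_add_const_mul {Ω : Type*} {mΩ : MeasurableSpace Ω} {μ : Measure Ω}
    [IsFiniteMeasure μ] {X Y : Ω → ℝ} (hX : MemLp X 2 μ) (hY : MemLp Y 2 μ) (a b : ℝ) :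
    Var[fun ω => a * X ω + b * Y ω; μ]
      = a ^ 2 * Var[X; μ] + 2 * a * b * cov[X, Y; μ] + b ^ 2 * Var[Y; μ] := by
  rw [variance_fun_add (hX.const_mul a) (hY.const_mul b), covariance_const_mul_left,
    covariance_const_mul_right, variance_const_mul, variance_const_mul]
  ring

theorem spingarch_stationary_variance_general
    {Ω : Type*} [F : MeasurableSpace Ω] (μ : Measure Ω) [IsProbabilityMeasure μ]
    (m m' : MeasurableSpace Ω) (hmm' : m ≤ m') (hm' : m' ≤ F)
    (η κ : ℝ) (hη : 0 ≤ η) (hκ : 0 ≤ κ) (hηκ : η + κ < 1)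
    (lam Z W Z' : Ω → ℝ)
    (hlam_meas : StronglyMeasurable[m] lam)
    (hlam_L2 : MemLp lam 2 μ)
    (hZ_L2 : MemLp Z 2 μ)
    (hZ_mean : μ[Z | m] =ᵐ[μ] lam)
    (hZ_sq : μ[fun ω => Z ω ^ 2 | m] =ᵐ[μ] fun ω => lam ω + lam ω ^ 2)
    (hW_L2 : MemLp W 2 μ)
    (hW_indep : Indep (MeasurableSpace.comap W Real.measurableSpace)
      (m ⊔ MeasurableSpace.comap Z Real.measurableSpace) μ)
    (lam' : Ω → ℝ) (hlam'_def : lam' = fun ω => W ω + η * Z ω + κ * lam ω)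
    (hZ'_L2 : MemLp Z' 2 μ)
    (hZ'_mean : μ[Z' | m'] =ᵐ[μ] lam')
    (hZ'_sq : μ[fun ω => Z' ω ^ 2 | m'] =ᵐ[μ] fun ω => lam' ω + lam' ω ^ 2)
    (hstat_mean : ∫ ω, Z' ω ∂μ = ∫ ω, Z ω ∂μ)
    (hstat_var : variance Z' μ = variance Z μ) :
    variance Z μ = variance W μ / (1 - (η + κ) ^ 2)
      + ((1 - κ ^ 2 - 2 * κ * η) / (1 - (η + κ) ^ 2)) * (∫ ω, Z ω ∂μ) := by
  have hmF : m ≤ F := hmm'.trans hm'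
  have hZ : IsCondPoisson μ m Z lam := ⟨hZ_mean, hZ_sq⟩
  have hZ' : IsCondPoisson μ m' Z' lam' := ⟨hZ'_mean, hZ'_sq⟩
  have hV_L2 : MemLp (fun ω => η * Z ω + κ * lam ω) 2 μ :=
    (hZ_L2.const_mul η).add (hlam_L2.const_mul κ)
  have hsplit : lam' = W + fun ω => η * Z ω + κ * lam ω := by
    rw [hlam'_def]; funext ω; simp only [Pi.add_apply]; ring
  have hlam'_L2 : MemLp lam' 2 μ := hsplit ▸ hW_L2.add hV_L2
  have hindep : IndepFun W (fun ω => η * Z ω + κ * lam ω) μ := by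
    refine (IndepFun_iff_Indep _ _ μ).2 (indep_of_indep_of_le_right hW_indep ?_)
    refine Measurable.comap_le (Measurable.add ?_ ?_)
    · exact ((comap_measurable Z).mono le_sup_right le_rfl).const_mul η
    · exact (hlam_meas.measurable.mono le_sup_left le_rfl).const_mul κ
  have hvar_lam' : Var[lam'; μ]
      = Var[W; μ] + η ^ 2 * Var[Z; μ] + (2 * η * κ + κ ^ 2) * Var[lam; μ] := by
    rw [hsplit, hindep.variance_add hW_L2 hV_L2, variance_const_mul_add_const_mul hZ_L2 hlam_L2,
      covariance_eq_variance_of_condExp_ae_eq hmF hlam_meas hlam_L2 hZ_L2 hZ_mean]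
    ring
  have hmean_lam' : ∫ ω, lam' ω ∂μ = ∫ ω, Z ω ∂μ := (hZ'.integral_eq hm').symm.trans hstat_mean
  have hvarZ := hZ.variance_eq hmF hZ_L2 hlam_L2
  have hvarZ' := hZ'.variance_eq hm' hZ'_L2 hlam'_L2
  rw [← hZ.integral_eq hmF] at hvarZ
  have hlinear : (1 - (η + κ) ^ 2) * Var[Z; μ]
      = Var[W; μ] + (1 - κ ^ 2 - 2 * κ * η) * ∫ ω, Z ω ∂μ := by
    linear_combination hvarZ' - hstat_var + hvar_lam' + hmean_lam' - (2 * η * κ + κ ^ 2) * hvarZ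
  have hq : (1 : ℝ) - (η + κ) ^ 2 ≠ 0 := by nlinarith
  field_simp
  linear_combination hlinear

/-- Stationary variance of the SPINGARCH(1,1) process: under second-order stationarity
(`E[Z'] = E[Z]` and `Var(Z') = Var(Z)`), with `η, κ ≥ 0`, `η + κ < 1`,
`Var(Z) = Var(W)/(1 − (η+κ)²) + ((1 − κ² − 2κη)/(1 − (η+κ)²))·E[Z]`. -/
theorem spingarch_stationary_variance
    {Ω : Type*} [F : MeasurableSpace Ω] (μ : Measure Ω) [IsProbabilityMeasure μ]
    (m m' : MeasurableSpace Ω) (hmm' : m ≤ m') (hm' : m' ≤ F)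
    (η κ : ℝ) (hη : 0 ≤ η) (hκ : 0 ≤ κ) (hηκ : η + κ < 1)
    (lam Z W Z' : Ω → ℝ)
    (hlam_nonneg : ∀ ω, 0 ≤ lam ω)
    (hlam_meas : StronglyMeasurable[m] lam)
    (hlam_L2 : MemLp lam 2 μ)
    (hZ_L2 : MemLp Z 2 μ)
    (hZ_meas : StronglyMeasurable[m'] Z)
    (hZ_mean : μ[Z | m] =ᵐ[μ] lam)
    (hZ_sq : μ[fun ω => Z ω ^ 2 | m] =ᵐ[μ] fun ω => lam ω + lam ω ^ 2)
    (hW_nonneg : ∀ ω, 0 ≤ W ω)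
    (hW_L2 : MemLp W 2 μ)
    (hW_meas : StronglyMeasurable[m'] W)
    (hW_indep : Indep (MeasurableSpace.comap W Real.measurableSpace)
      (m ⊔ MeasurableSpace.comap Z Real.measurableSpace) μ)
    (lam' : Ω → ℝ) (hlam'_def : lam' = fun ω => W ω + η * Z ω + κ * lam ω)
    (hZ'_L2 : MemLp Z' 2 μ)
    (hZ'_mean : μ[Z' | m'] =ᵐ[μ] lam')
    (hZ'_sq : μ[fun ω => Z' ω ^ 2 | m'] =ᵐ[μ] fun ω => lam' ω + lam' ω ^ 2)
    (hstat_mean : ∫ ω, Z' ω ∂μ = ∫ ω, Z ω ∂μ)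
    (hstat_var : variance Z' μ = variance Z μ) :
    variance Z μ = variance W μ / (1 - (η + κ) ^ 2)
      + ((1 - κ ^ 2 - 2 * κ * η) / (1 - (η + κ) ^ 2)) * (∫ ω, Z ω ∂μ) :=
  spingarch_stationary_variance_general (F := F) μ m m' hmm' hm' η κ hη hκ hηκ lam Z W Z' hlam_meas
    hlam_L2 hZ_L2 hZ_mean hZ_sq hW_L2 hW_indep lam' hlam'_def hZ'_L2 hZ'_mean hZ'_sq hstat_mean
    hstat_var
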